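/- For every ρ > 0 there exists a finite subset E of M_1^{(0),N}(Z_+) such that sup_{z ∈ M_1^{(0),N}(Z_+)} E_z[ exp( ρ · (ext ∧ τ_E) ) ] < ∞, where τ_E = inf{ t ≥ 0 : Z^N(t) ∈ E } is the first hitting time of E and ext = inf{ t ≥ 0 : Z^N(t)(0) = 0 } is the clicking (extinction) time. -/

import Mathlib

/-!
Take for `E` the populations with `z(0) ≥ 1` in which nobody carries more than `K` mutations.
While `z(0) ≥ 1` the total fitness is at least `1`, so a parent of type `i` is chosen with
probability at most `N (1-α)^i`; hence an offspring carries more than `K` mutations with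
probability at most a geometric tail plus a Poisson tail, uniformly in `z`. A union bound over the
`N` offspring shows that, from every state with `z(0) ≥ 1`, the chain avoids both `E` and the
click in one step with probability at most `ε`, where `ε` can be made as small as we like by
taking `K` large. Thus `P(ext ∧ τ_E > k) ≤ ε^k`, and `ε = e^{-ρ}/2` makes
`Σ_k e^{ρk} P(ext ∧ τ_E > k)` converge uniformly in the starting state.
-/

open scoped BigOperators Classical ENNReal NNReal

noncomputable section

namespace MullerRatchet

/-- A population state: counts of individuals per number of deleterious mutations,
totalling `N` individuals.  This is the (count version of the) space `M_1^N(Z_+)`. -/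
def State (N : ℕ) : Type := {z : ℕ →₀ ℕ // z.sum (fun _ n => n) = N}

/-- Total selective weight `Σ_i z(i) (1-α)^i` of a population. -/
def totalWeight (N : ℕ) (α : ℝ) (z : State N) : ℝ :=
  z.1.sum fun i n => (n : ℝ) * (1 - α) ^ i

/-- Probability that one offspring chooses a parent carrying `i` mutations. -/
def parentProb (N : ℕ) (α : ℝ) (z : State N) (i : ℕ) : ℝ :=
  ((z.1 i : ℝ) * (1 - α) ^ i) / totalWeight N α z

/-- The Poisson(`lam`) probability mass function. -/
def poissonPMF (lam : ℝ) (k : ℕ) : ℝ :=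
  Real.exp (-lam) * lam ^ k / (Nat.factorial k : ℝ)

/-- Law of the number of mutations of one offspring: parent's type `i` plus an
independent Poisson(`lam`) number of new mutations. -/
def offspringProb (N : ℕ) (α lam : ℝ) (z : State N) (m : ℕ) : ℝ :=
  ∑ i ∈ Finset.range (m + 1), parentProb N α z i * poissonPMF lam (m - i)

/-- Empirical counts of the types of the `N` offspring. -/
def empCount (N : ℕ) (f : Fin N → ℕ) (m : ℕ) : ℕ :=
  (Finset.univ.filter fun n => f n = m).card

/-- One-step transition probability `P_z(Z^N(1) = y)` of Haigh's Muller-ratchet chain: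
the `N` offspring choose their types independently according to `offspringProb`. -/
def step (N : ℕ) (α lam : ℝ) (z y : State N) : ℝ :=
  ∑' f : Fin N → ℕ,
    if ∀ m, y.1 m = empCount N f m then ∏ n : Fin N, offspringProb N α lam z (f n) else 0


/-- Iterated kernel of the chain killed both when the fittest class dies out
(`y(0) = 0`) and when entering the set `E`. -/
def iterBoth (N : ℕ) (α lam : ℝ) (E : Set (State N)) :
    ℕ → State N → State N → ℝ
  | 0, z, y => if z = y then 1 else 0
  | t + 1, z, y =>
      ∑' w : State N,
        (if 1 ≤ w.1 0 ∧ w ∉ E then step N α lam z w else 0) * iterBoth N α lam E t w y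

/-- `P_z(t < ext ∧ t < τ_E)`: the probability that, up to time `t`, the chain has
neither clicked (lost its fittest class) nor entered `E`. -/
def survBoth (N : ℕ) (α lam : ℝ) (E : Set (State N)) (t : ℕ) (z : State N) : ℝ :=
  if 1 ≤ z.1 0 ∧ z ∉ E then ∑' y : State N, iterBoth N α lam E t z y else 0

/-- `E_z[exp(ρ (ext ∧ τ_E))]` for the integer-valued stopping time `T = ext ∧ τ_E`,
computed (in `ℝ≥0∞`, so that divergence is meaningful) via
`E[e^{ρT}] = 1 + (e^ρ - 1) Σ_{k≥0} e^{ρ k} P(T > k)`. -/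
def expMoment (N : ℕ) (α lam : ℝ) (E : Set (State N)) (ρ : ℝ) (z : State N) : ℝ≥0∞ :=
  1 + ENNReal.ofReal (Real.exp ρ - 1) *
      ∑' k : ℕ, ENNReal.ofReal (Real.exp (ρ * k)) *
        ENNReal.ofReal (survBoth N α lam E k z)

end MullerRatchet

open Filter Topology Finset

namespace ENNReal

lemma ofReal_tsum_le_tsum_ofReal {ι : Type*} {f : ι → ℝ} (hf : ∀ i, 0 ≤ f i) :
    ENNReal.ofReal (∑' i, f i) ≤ ∑' i, ENNReal.ofReal (f i) := by
  by_cases h : Summable f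
  · exact (ENNReal.ofReal_tsum_of_nonneg hf h).le
  · simp [tsum_eq_zero_of_not_summable h]

lemma tsum_sum_antidiagonal (F : ℕ × ℕ → ℝ≥0∞) :
    ∑' n, ∑ p ∈ antidiagonal n, F p = ∑' p, F p := by
  rw [← HasAntidiagonal.sigmaAntidiagonalEquivProd.tsum_eq, ENNReal.tsum_sigma']
  exact tsum_congr fun n => (Finset.tsum_subtype (antidiagonal n) F).symm

lemma tendsto_tsum_ite_lt_atTop_zero {f : ℕ → ℝ≥0∞} (hf : ∑' m, f m ≠ ∞) :
    Tendsto (fun K => ∑' m, if K < m then f m else 0) atTop (𝓝 0) := by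
  refine ((ENNReal.tendsto_tsum_compl_atTop_zero hf).comp
    (tendsto_finset_range.comp (tendsto_add_atTop_nat 1))).congr fun K => ?_
  refine (_root_.tsum_subtype {m : ℕ | m ∉ range (K + 1)} f).trans (tsum_congr fun m => ?_)
  rw [Set.indicator_apply]
  exact if_congr (by simp) rfl rfl

lemma prod_univ_tsum {β : Type*} : ∀ {n : ℕ} (g : Fin n → β → ℝ≥0∞),
    ∏ i, ∑' b, g i b = ∑' f : Fin n → β, ∏ i, g i (f i)
  | 0, g => by simp
  | n + 1, g => by
    rw [← (Fin.consEquiv fun _ => β).tsum_eq, ENNReal.tsum_prod', Fin.prod_univ_succ]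
    simp [Fin.consEquiv, Fin.prod_univ_succ, ENNReal.tsum_mul_left, ENNReal.tsum_mul_right,
      prod_univ_tsum]

lemma tsum_pi_ite_exists_le {β : Type*} {n : ℕ} {p : β → ℝ≥0∞} (hp : ∑' b, p b ≤ 1)
    (B : β → Prop) [DecidablePred B] :
    ∑' f : Fin n → β, (if ∃ i, B (f i) then ∏ i, p (f i) else 0) ≤
      n * ∑' b, if B b then p b else 0 := by
  set q : β → ℝ≥0∞ := fun b => if B b then p b else 0
  have h_factor : ∀ i (f : Fin n → β), (if B (f i) then ∏ j, p (f j) else 0) =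
      ∏ j, Function.update (fun _ => p) i q j (f j) := by
    intro i f
    have h_rest : ∏ j ∈ univ.erase i, Function.update (fun _ => p) i q j (f j) =
        ∏ j ∈ univ.erase i, p (f j) :=
      prod_congr rfl fun j hj => by rw [Function.update_of_ne (ne_of_mem_erase hj)]
    rw [← mul_prod_erase univ (fun j => Function.update (fun _ => p) i q j (f j)) (mem_univ i),
      h_rest, ← mul_prod_erase univ (fun j => p (f j)) (mem_univ i), Function.update_self]
    split_ifs with h <;> simp [q, h]
  calc ∑' f : Fin n → β, (if ∃ i, B (f i) then ∏ i, p (f i) else 0)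
      ≤ ∑' f : Fin n → β, ∑ i, if B (f i) then ∏ j, p (f j) else 0 := by
        refine ENNReal.tsum_le_tsum fun f => ?_
        split_ifs with h
        · obtain ⟨i, hi⟩ := h
          exact (if_pos hi).symm.le.trans
            (single_le_sum (f := fun i => if B (f i) then _ else 0) (by simp) (mem_univ i))
        · exact zero_le
    _ = ∑ i : Fin n, ∏ j, ∑' b, Function.update (fun _ => p) i q j b := by
        rw [Summable.tsum_finsetSum fun _ _ => ENNReal.summable]
        simp_rw [h_factor, ← prod_univ_tsum]
    _ ≤ ∑ _i : Fin n, ∑' b, q b := by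
        refine sum_le_sum fun i _ => ?_
        rw [← mul_prod_erase univ _ (mem_univ i), Function.update_self]
        refine mul_le_of_le_one_right' (prod_le_one' fun j hj => ?_)
        rw [Function.update_of_ne (ne_of_mem_erase hj)]
        exact hp
    _ = n * ∑' b, q b := by simp

lemma tsum_antidiagonal_tail_le (a b : ℕ → ℝ≥0∞) (K₀ K₁ : ℕ) :
    ∑' n, (if K₀ + K₁ < n then ∑ p ∈ antidiagonal n, a p.1 * b p.2 else 0) ≤
      (∑' i, if K₀ < i then a i else 0) * ∑' j, b j +
        (∑' i, a i) * ∑' j, if K₁ < j then b j else 0 := by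
  calc ∑' n, (if K₀ + K₁ < n then ∑ p ∈ antidiagonal n, a p.1 * b p.2 else 0)
      = ∑' p : ℕ × ℕ, if K₀ + K₁ < p.1 + p.2 then a p.1 * b p.2 else 0 := by
        rw [← tsum_sum_antidiagonal]
        refine tsum_congr fun n => ?_
        split_ifs with h
        · exact sum_congr rfl fun p hp => by rw [if_pos ((mem_antidiagonal.mp hp).symm ▸ h)]
        · exact (sum_eq_zero fun p hp => by rw [if_neg ((mem_antidiagonal.mp hp).symm ▸ h)]).symm
    _ ≤ ∑' p : ℕ × ℕ, ((if K₀ < p.1 then a p.1 else 0) * b p.2 +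
          a p.1 * if K₁ < p.2 then b p.2 else 0) := by
        refine ENNReal.tsum_le_tsum fun p => ?_
        -- `K₀ + K₁ < i + j` forces `K₀ < i` or `K₁ < j`
        split_ifs <;> first | omega | simp
    _ = _ := by
        rw [ENNReal.tsum_add, ENNReal.tsum_prod', ENNReal.tsum_prod']
        simp_rw [ENNReal.tsum_mul_left, ENNReal.tsum_mul_right]

end ENNReal

namespace MullerRatchet

variable {N : ℕ} {α lam : ℝ}

lemma State.apply_le (z : State N) (i : ℕ) : z.1 i ≤ N := by
  refine le_of_le_of_eq ?_ z.2
  rw [Finsupp.sum]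
  by_cases hi : i ∈ z.1.support
  · exact single_le_sum (f := z.1) (fun _ _ => Nat.zero_le _) hi
  · simp [Finsupp.notMem_support_iff.mp hi]

section Selection

variable (hα : α ≤ 1)
include hα

lemma totalWeight_nonneg (z : State N) : 0 ≤ totalWeight N α z :=
  Finsupp.sum_nonneg fun i _ => mul_nonneg (Nat.cast_nonneg _) (pow_nonneg (sub_nonneg.mpr hα) i)

lemma one_le_totalWeight {z : State N} (hz : 1 ≤ z.1 0) : 1 ≤ totalWeight N α z := by
  rw [totalWeight, Finsupp.sum]
  calc (1 : ℝ) ≤ (z.1 0 : ℝ) * (1 - α) ^ 0 := by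
        rw [pow_zero, mul_one]; exact_mod_cast hz
    _ ≤ ∑ i ∈ z.1.support, (z.1 i : ℝ) * (1 - α) ^ i :=
        single_le_sum (f := fun i => (z.1 i : ℝ) * (1 - α) ^ i)
          (fun i _ => mul_nonneg (Nat.cast_nonneg _) (pow_nonneg (sub_nonneg.mpr hα) i))
          (Finsupp.mem_support_iff.mpr (by omega))

lemma parentProb_nonneg (z : State N) (i : ℕ) : 0 ≤ parentProb N α z i :=
  div_nonneg (mul_nonneg (Nat.cast_nonneg _) (pow_nonneg (sub_nonneg.mpr hα) i))
    (totalWeight_nonneg hα z)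

lemma parentProb_le {z : State N} (hz : 1 ≤ z.1 0) (i : ℕ) :
    parentProb N α z i ≤ N * (1 - α) ^ i := by
  have h_pow : 0 ≤ (1 - α) ^ i := pow_nonneg (sub_nonneg.mpr hα) i
  calc parentProb N α z i ≤ (z.1 i : ℝ) * (1 - α) ^ i :=
        div_le_self (mul_nonneg (Nat.cast_nonneg _) h_pow) (one_le_totalWeight hα hz)
    _ ≤ N * (1 - α) ^ i := mul_le_mul_of_nonneg_right (mod_cast z.apply_le i) h_pow

lemma tsum_ofReal_parentProb_le_one (z : State N) :
    ∑' i, ENNReal.ofReal (parentProb N α z i) ≤ 1 := by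
  rw [tsum_eq_sum (s := z.1.support) fun i hi => by
      simp [parentProb, Finsupp.notMem_support_iff.mp hi],
    ← ENNReal.ofReal_sum_of_nonneg fun i _ => parentProb_nonneg hα z i, ENNReal.ofReal_le_one]
  simp only [parentProb]
  rw [← sum_div]
  exact div_self_le_one _

end Selection

lemma hasSum_poissonPMF (hlam : 0 ≤ lam) : HasSum (poissonPMF lam) 1 :=
  ProbabilityTheory.hasSum_one_poissonMeasure ⟨lam, hlam⟩

lemma poissonPMF_nonneg (hlam : 0 ≤ lam) (k : ℕ) : 0 ≤ poissonPMF lam k := by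
  unfold poissonPMF
  positivity

lemma tsum_ofReal_poissonPMF (hlam : 0 ≤ lam) : ∑' k, ENNReal.ofReal (poissonPMF lam k) = 1 := by
  rw [← ENNReal.ofReal_tsum_of_nonneg (poissonPMF_nonneg hlam) (hasSum_poissonPMF hlam).summable,
    (hasSum_poissonPMF hlam).tsum_eq, ENNReal.ofReal_one]

section Offspring

variable (hα : α ≤ 1) (hlam : 0 ≤ lam)
include hα hlam

lemma offspringProb_nonneg (z : State N) (m : ℕ) : 0 ≤ offspringProb N α lam z m :=
  sum_nonneg fun i _ => mul_nonneg (parentProb_nonneg hα z i) (poissonPMF_nonneg hlam _)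

lemma ofReal_offspringProb (z : State N) (m : ℕ) :
    ENNReal.ofReal (offspringProb N α lam z m) = ∑ p ∈ antidiagonal m,
      ENNReal.ofReal (parentProb N α z p.1) * ENNReal.ofReal (poissonPMF lam p.2) := by
  rw [offspringProb, ← Nat.sum_antidiagonal_eq_sum_range_succ
      (fun i j => parentProb N α z i * poissonPMF lam j),
    ENNReal.ofReal_sum_of_nonneg fun p _ =>
      mul_nonneg (parentProb_nonneg hα z _) (poissonPMF_nonneg hlam _)]
  simp_rw [ENNReal.ofReal_mul (parentProb_nonneg hα z _)]

lemma tsum_ofReal_offspringProb_le_one (z : State N) :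
    ∑' m, ENNReal.ofReal (offspringProb N α lam z m) ≤ 1 := by
  simp_rw [ofReal_offspringProb hα hlam, ENNReal.tsum_sum_antidiagonal, ENNReal.tsum_prod',
    ENNReal.tsum_mul_left, tsum_ofReal_poissonPMF hlam, mul_one]
  exact tsum_ofReal_parentProb_le_one hα z

lemma tsum_offspringProb_tail_le {z : State N} (hz : 1 ≤ z.1 0) (K₀ K₁ : ℕ) :
    ∑' m, (if K₀ + K₁ < m then ENNReal.ofReal (offspringProb N α lam z m) else 0) ≤
      (∑' i, if K₀ < i then ENNReal.ofReal (N * (1 - α) ^ i) else 0) +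
        ∑' j, if K₁ < j then ENNReal.ofReal (poissonPMF lam j) else 0 := by
  simp_rw [ofReal_offspringProb hα hlam]
  refine (ENNReal.tsum_antidiagonal_tail_le (fun i => ENNReal.ofReal (parentProb N α z i))
    (fun j => ENNReal.ofReal (poissonPMF lam j)) K₀ K₁).trans (add_le_add ?_ ?_)
  · rw [tsum_ofReal_poissonPMF hlam, mul_one]
    refine ENNReal.tsum_le_tsum fun i => ?_
    split_ifs
    · exact ENNReal.ofReal_le_ofReal (parentProb_le hα hz i)
    · exact le_rfl
  · exact mul_le_of_le_one_left' (tsum_ofReal_parentProb_le_one hα z)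

end Offspring

lemma exists_offspringProb_tail_le (hα₀ : 0 < α) (hα₁ : α < 1) (hlam : 0 ≤ lam) {δ : ℝ≥0∞}
    (hδ : 0 < δ) : ∃ K, ∀ z : State N, 1 ≤ z.1 0 →
      ∑' m, (if K < m then ENNReal.ofReal (offspringProb N α lam z m) else 0) ≤ δ := by
  have h_geom : ∑' i, ENNReal.ofReal (N * (1 - α) ^ i) ≠ ∞ := by
    rw [← ENNReal.ofReal_tsum_of_nonneg
      (fun i => mul_nonneg (Nat.cast_nonneg _) (pow_nonneg (by linarith) i))
      ((summable_geometric_of_lt_one (by linarith) (by linarith)).mul_left _)]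
    exact ENNReal.ofReal_ne_top
  have h_poisson : ∑' k, ENNReal.ofReal (poissonPMF lam k) ≠ ∞ := by
    rw [tsum_ofReal_poissonPMF hlam]
    exact ENNReal.one_ne_top
  have h_tails := (ENNReal.tendsto_tsum_ite_lt_atTop_zero h_geom).add
    (ENNReal.tendsto_tsum_ite_lt_atTop_zero h_poisson)
  rw [add_zero] at h_tails
  obtain ⟨K, hK⟩ := (h_tails.eventually (gt_mem_nhds hδ)).exists
  exact ⟨K + K, fun z hz =>
    (tsum_offspringProb_tail_le hα₁.le hlam hz K K).trans hK.le⟩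

def empState (N : ℕ) (f : Fin N → ℕ) : State N :=
  ⟨Multiset.toFinsupp (univ.val.map f), (Multiset.toFinsupp_sum_eq _).trans (by simp)⟩

lemma empState_apply (f : Fin N → ℕ) (m : ℕ) : (empState N f).1 m = empCount N f m := by
  simp only [empState, Multiset.toFinsupp_apply, Multiset.count_map, empCount, Finset.card_def,
    Finset.filter_val, eq_comm]

lemma forall_eq_empCount_iff {y : State N} {f : Fin N → ℕ} :
    (∀ m, y.1 m = empCount N f m) ↔ y = empState N f := by
  simp_rw [← empState_apply]
  exact ⟨fun h => Subtype.ext (Finsupp.ext h), fun h m => by rw [h]⟩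

lemma tsum_ofReal_step_le (hα : α ≤ 1) (hlam : 0 ≤ lam) (P : State N → Prop) [DecidablePred P]
    (z : State N) :
    ∑' w, ENNReal.ofReal (if P w then step N α lam z w else 0) ≤
      ∑' f : Fin N → ℕ,
        if P (empState N f) then ∏ n, ENNReal.ofReal (offspringProb N α lam z (f n)) else 0 := by
  have h_prod_nonneg (f : Fin N → ℕ) : 0 ≤ ∏ n, offspringProb N α lam z (f n) :=
    prod_nonneg fun n _ => offspringProb_nonneg hα hlam z (f n)
  calc ∑' w, ENNReal.ofReal (if P w then step N α lam z w else 0)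
      ≤ ∑' w, ∑' f : Fin N → ℕ, if w = empState N f ∧ P w then
          ∏ n, ENNReal.ofReal (offspringProb N α lam z (f n)) else 0 := by
        refine ENNReal.tsum_le_tsum fun w => ?_
        split_ifs with hw
        · refine (ENNReal.ofReal_tsum_le_tsum_ofReal fun f => ?_).trans
            (ENNReal.tsum_le_tsum fun f => ?_)
          · split_ifs
            exacts [h_prod_nonneg f, le_rfl]
          · simp_rw [forall_eq_empCount_iff, hw, and_true]
            split_ifs
            exacts [(ENNReal.ofReal_prod_of_nonneg fun n _ =>
              offspringProb_nonneg hα hlam z (f n)).le, by simp]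
        · exact ENNReal.ofReal_zero.le.trans zero_le
    _ = _ := by
        rw [ENNReal.tsum_comm]
        simp_rw [ite_and]
        exact tsum_congr fun f => tsum_ite_eq (empState N f) _

-- The populations with `z(0) ≥ 1` in which nobody carries more than `K` mutations.
def lowLoadStates (N K : ℕ) : Finset (State N) :=
  {z ∈ univ.image (fun f : Fin N → Fin (K + 1) => empState N fun n => f n) | 1 ≤ z.1 0}

lemma empState_mem_lowLoadStates {K : ℕ} {f : Fin N → ℕ} (hf : ∀ n, f n ≤ K)
    (h0 : 1 ≤ (empState N f).1 0) : empState N f ∈ lowLoadStates N K :=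
  mem_filter.mpr ⟨mem_image.mpr ⟨fun n => ⟨f n, Nat.lt_succ_of_le (hf n)⟩, mem_univ _, rfl⟩, h0⟩

lemma tsum_oneStepSurvival_le (hα : α ≤ 1) (hlam : 0 ≤ lam) {K : ℕ} {E : Set (State N)}
    (hE : ∀ f : Fin N → ℕ, (∀ n, f n ≤ K) → 1 ≤ (empState N f).1 0 → empState N f ∈ E)
    {z : State N} :
    ∑' w, ENNReal.ofReal (if 1 ≤ w.1 0 ∧ w ∉ E then step N α lam z w else 0) ≤
      N * ∑' m, if K < m then ENNReal.ofReal (offspringProb N α lam z m) else 0 := by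
  calc _ ≤ ∑' f : Fin N → ℕ, if 1 ≤ (empState N f).1 0 ∧ empState N f ∉ E
          then ∏ n, ENNReal.ofReal (offspringProb N α lam z (f n)) else 0 :=
        tsum_ofReal_step_le hα hlam _ z
    _ ≤ ∑' f : Fin N → ℕ, if ∃ n, K < f n then
          ∏ n, ENNReal.ofReal (offspringProb N α lam z (f n)) else 0 := by
        refine ENNReal.tsum_le_tsum fun f => ?_
        split_ifs with h_bad h_exists
        · exact le_rfl
        · push Not at h_exists
          exact absurd (hE f h_exists h_bad.1) h_bad.2
        · exact zero_le
        · exact le_rfl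
    _ ≤ _ := ENNReal.tsum_pi_ite_exists_le (tsum_ofReal_offspringProb_le_one hα hlam z) (K < ·)

section Survival

variable (hα : α ≤ 1) (hlam : 0 ≤ lam)
include hα hlam

lemma step_nonneg (z y : State N) : 0 ≤ step N α lam z y :=
  tsum_nonneg fun f => by
    split_ifs
    exacts [prod_nonneg fun n _ => offspringProb_nonneg hα hlam z _, le_rfl]

lemma iterBoth_nonneg (E : Set (State N)) :
    ∀ t (z y : State N), 0 ≤ iterBoth N α lam E t z y
  | 0, z, y => by rw [iterBoth]; split_ifs <;> norm_num
  | t + 1, z, y => by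
    rw [iterBoth]
    refine tsum_nonneg fun w => mul_nonneg ?_ (iterBoth_nonneg E t w y)
    split_ifs
    exacts [step_nonneg hα hlam z w, le_rfl]

variable {E : Set (State N)} {ε : ℝ≥0∞}

lemma tsum_ofReal_iterBoth_le
    (h_one_step : ∀ z : State N, 1 ≤ z.1 0 →
      ∑' w, ENNReal.ofReal (if 1 ≤ w.1 0 ∧ w ∉ E then step N α lam z w else 0) ≤ ε) :
    ∀ t (z : State N), 1 ≤ z.1 0 → ∑' y, ENNReal.ofReal (iterBoth N α lam E t z y) ≤ ε ^ t
  | 0, z, _ => by simp [iterBoth, apply_ite ENNReal.ofReal]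
  | t + 1, z, hz => by
    set k := fun w : State N => if 1 ≤ w.1 0 ∧ w ∉ E then step N α lam z w else 0
    have hk : ∀ w, 0 ≤ k w := fun w => by
      simp only [k]; split_ifs
      exacts [step_nonneg hα hlam z w, le_rfl]
    calc ∑' y, ENNReal.ofReal (iterBoth N α lam E (t + 1) z y)
        ≤ ∑' y, ∑' w, ENNReal.ofReal (k w) * ENNReal.ofReal (iterBoth N α lam E t w y) := by
          refine ENNReal.tsum_le_tsum fun y => ?_
          rw [iterBoth]
          refine (ENNReal.ofReal_tsum_le_tsum_ofReal fun w =>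
            mul_nonneg (hk w) (iterBoth_nonneg hα hlam E t w y)).trans_eq (tsum_congr fun w => ?_)
          exact ENNReal.ofReal_mul (hk w)
      _ = ∑' w, ENNReal.ofReal (k w) * ∑' y, ENNReal.ofReal (iterBoth N α lam E t w y) := by
          rw [ENNReal.tsum_comm]
          simp_rw [ENNReal.tsum_mul_left]
      _ ≤ ∑' w, ENNReal.ofReal (k w) * ε ^ t := by
          refine ENNReal.tsum_le_tsum fun w => ?_
          by_cases hw : 1 ≤ w.1 0 ∧ w ∉ E
          · exact mul_le_mul_right (tsum_ofReal_iterBoth_le h_one_step t w hw.1) _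
          · simp [k, hw]
      _ ≤ ε * ε ^ t := by
          rw [ENNReal.tsum_mul_right]
          exact mul_le_mul_left (h_one_step z hz) _
      _ = ε ^ (t + 1) := (pow_succ' ε t).symm

lemma ofReal_survBoth_le
    (h_one_step : ∀ z : State N, 1 ≤ z.1 0 →
      ∑' w, ENNReal.ofReal (if 1 ≤ w.1 0 ∧ w ∉ E then step N α lam z w else 0) ≤ ε)
    (t : ℕ) (z : State N) : ENNReal.ofReal (survBoth N α lam E t z) ≤ ε ^ t := by
  rw [survBoth]
  split_ifs with hz
  · exact (ENNReal.ofReal_tsum_le_tsum_ofReal (iterBoth_nonneg hα hlam E t z)).trans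
      (tsum_ofReal_iterBoth_le hα hlam h_one_step t z hz.1)
  · simp

end Survival

lemma expMoment_le {E : Set (State N)} {ρ : ℝ} {z : State N} {ε : ℝ≥0∞}
    (h_surv : ∀ k, ENNReal.ofReal (survBoth N α lam E k z) ≤ ε ^ k) :
    expMoment N α lam E ρ z ≤
      1 + ENNReal.ofReal (Real.exp ρ - 1) * ∑' k : ℕ, (ENNReal.ofReal (Real.exp ρ) * ε) ^ k := by
  rw [expMoment]
  gcongr with k
  rw [mul_pow, ← ENNReal.ofReal_pow (Real.exp_nonneg ρ), ← Real.exp_nat_mul, mul_comm ρ]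
  exact mul_le_mul_right (h_surv k) _

theorem statement2_general (N : ℕ) (α lam : ℝ)
    (hα0 : 0 < α) (hα1 : α < 1) (hlam : 0 < lam)
    (ρ : ℝ) :
    ∃ E : Finset (State N), (∀ z ∈ E, 1 ≤ z.1 0) ∧
      (⨆ z : {z : State N // 1 ≤ z.1 0},
          expMoment N α lam (↑E : Set (State N)) ρ z.1) < ⊤ := by
  set ε : ℝ≥0∞ := ENNReal.ofReal (Real.exp (-ρ)) / 2
  have h_ratio : ENNReal.ofReal (Real.exp ρ) * ε = 2⁻¹ := by
    simp only [ε]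
    rw [ENNReal.div_eq_inv_mul, mul_left_comm, ← ENNReal.ofReal_mul (Real.exp_nonneg ρ),
      ← Real.exp_add, add_neg_cancel, Real.exp_zero, ENNReal.ofReal_one, mul_one]
  have hδ : 0 < ε / N := ENNReal.div_pos (by simp [ε, Real.exp_pos]) (ENNReal.natCast_ne_top N)
  obtain ⟨K, hK⟩ := exists_offspringProb_tail_le hα0 hα1 hlam.le hδ
  have h_one_step (z : State N) (hz : 1 ≤ z.1 0) :=
    (tsum_oneStepSurvival_le hα1.le hlam.le (E := lowLoadStates N K) (z := z)
      fun _ => empState_mem_lowLoadStates).trans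
      ((mul_le_mul_right (hK z hz) _).trans ENNReal.mul_div_le)
  refine ⟨lowLoadStates N K, fun z hz => (mem_filter.mp hz).2, ?_⟩
  calc ⨆ z : {z : State N // 1 ≤ z.1 0}, expMoment N α lam (lowLoadStates N K) ρ z.1
      ≤ 1 + ENNReal.ofReal (Real.exp ρ - 1) * ∑' k : ℕ, (2⁻¹ : ℝ≥0∞) ^ k :=
        iSup_le fun z => h_ratio ▸
          expMoment_le (ofReal_survBoth_le hα1.le hlam.le h_one_step · z.1)
    _ < ⊤ := by
        rw [ENNReal.tsum_geometric, ENNReal.one_sub_inv_two, inv_inv]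
        finiteness

/-- for every `ρ > 0` there is a finite subset `E` of `M_1^{(0),N}(Z_+)`
such that `sup_{z ∈ M_1^{(0),N}(Z_+)} E_z[exp(ρ (ext ∧ τ_E))] < ∞`. -/
theorem statement2 (N : ℕ) (hN : 1 ≤ N) (α lam : ℝ)
    (hα0 : 0 < α) (hα1 : α < 1) (hlam : 0 < lam)
    (ρ : ℝ) (hρ : 0 < ρ) :
    ∃ E : Finset (State N), (∀ z ∈ E, 1 ≤ z.1 0) ∧
      (⨆ z : {z : State N // 1 ≤ z.1 0},
          expMoment N α lam (↑E : Set (State N)) ρ z.1) < ⊤ :=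
  statement2_general N α lam hα0 hα1 hlam ρ

end MullerRatchet
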